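/- Let π₁ be the policy defined by π₁(a) = n(a)/n(p(a)) for every a ∈ A. Then for every reduced strategy σ ∈ S and every infoset v ∈ N(σ), the sum of ln(π₁(a)) over all actions a ∈ A(σ) that are descendants of v equals −ln(n(v)). -/

import Mathlib

open scoped Classical

/-- A finite rooted tree whose internal nodes are partitioned into infosets `N`
and actions `A`: the root is an infoset, every child of an infoset is an action,
every child of an action is an infoset or a leaf, and every infoset has at
least two children.  The tree structure is given by a parent function together
with a depth function witnessing well-foundedness. -/
structure EFTree (V : Type*) [Fintype V] [DecidableEq V] where
  root : V
  parent : V → V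
  parent_root : parent root = root
  depth : V → ℕ
  depth_root : depth root = 0
  depth_parent : ∀ v : V, v ≠ root → depth v = depth (parent v) + 1
  N : Finset V
  A : Finset V
  disj : Disjoint N A
  internal_iff : ∀ v : V, (v ∈ N ∨ v ∈ A) ↔ ∃ u : V, u ≠ root ∧ parent u = v
  root_N : root ∈ N
  infoset_child : ∀ u : V, u ≠ root → parent u ∈ N → u ∈ A
  action_child : ∀ u : V, u ≠ root → parent u ∈ A → u ∉ A
  branching : ∀ v ∈ N, 1 < (Finset.univ.filter fun u => u ≠ root ∧ parent u = v).card

namespace EFTree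

variable {V : Type*} [Fintype V] [DecidableEq V] (T : EFTree V)

/-- The set `C(v)` of children of a node `v`. -/
def children (v : V) : Finset V := Finset.univ.filter fun u => u ≠ T.root ∧ T.parent u = v

/-- The set `L` of leaves: the nodes that are neither infosets nor actions. -/
def leaves : Finset V := Finset.univ \ (T.N ∪ T.A)

/-- `Desc u v` means `u` is a descendant of `v` (every node is a descendant of itself). -/
def Desc (u v : V) : Prop := ∃ k : ℕ, T.parent^[k] u = v

/-- The reachable set `V(σ)` of a (sub-)strategy `σ` started at the node `w`:
the minimal set of nodes containing `w`, containing `σ v` for every infoset `v`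
in the set, and containing all children of every action in the set. -/
def reachFrom (w : V) (σ : V → V) : Set V :=
  ⋂₀ {s : Set V | w ∈ s ∧ (∀ v ∈ T.N, v ∈ s → σ v ∈ s) ∧
      ∀ a ∈ T.A, a ∈ s → ∀ u ∈ T.children a, u ∈ s}

/-- The reachable set `V(σ)` of a strategy `σ`. -/
def reachS (σ : V → V) : Set V := T.reachFrom T.root σ

/-- `σ : V → V` canonically represents a reduced sub-strategy at the node `w`:
at every infoset in its reachable set it selects a child, and everywhere else it
is the identity (so that each reduced sub-strategy, i.e. each restriction of a
sub-strategy at `w` to the infosets it can reach, has exactly one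
representative). -/
def IsRedSubStrat (w : V) (σ : V → V) : Prop :=
  (∀ v ∈ T.N, v ∈ T.reachFrom w σ → σ v ∈ T.children v) ∧
  ∀ v : V, ¬(v ∈ T.N ∧ v ∈ T.reachFrom w σ) → σ v = v

/-- `σ : V → V` canonically represents a reduced strategy, i.e. a member of `S`. -/
def IsRedStrat (σ : V → V) : Prop := T.IsRedSubStrat T.root σ

/-- The set `A(σ) = A ∩ V(σ)` of actions reachable under a reduced (sub-)strategy. -/
noncomputable def Aset (σ : V → V) : Finset V := T.A.filter fun a => a ∈ T.reachS σ

/-- The set `A(σ) = A ∩ V(σ)` for a reduced sub-strategy at `w`. -/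
noncomputable def AsetFrom (w : V) (σ : V → V) : Finset V := T.A.filter fun a => a ∈ T.reachFrom w σ

/-- An environment chooses a child of every action. -/
def IsEnv (μ : V → V) : Prop := ∀ a ∈ T.A, μ a ∈ T.children a

/-- The reachable set `V(μ)` of an environment `μ`: the minimal set of nodes
containing the root, all children of every infoset in the set, and `μ a` for
every action `a` in the set. -/
def reachE (μ : V → V) : Set V :=
  ⋂₀ {s : Set V | T.root ∈ s ∧ (∀ v ∈ T.N, v ∈ s → ∀ u ∈ T.children v, u ∈ s) ∧
      ∀ a ∈ T.A, a ∈ s → μ a ∈ s}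

/-- `Z(μ)`: the set of actions reachable under `μ` whose chosen child is a leaf. -/
noncomputable def Zset (μ : V → V) : Finset V := T.A.filter fun a => a ∈ T.reachE μ ∧ μ a ∈ T.leaves

/-- A policy assigns to each action a probability in `[0,1]`, summing to one
over the children of each infoset. -/
def IsPolicy (π : V → ℝ) : Prop :=
  (∀ a ∈ T.A, 0 ≤ π a ∧ π a ≤ 1) ∧ ∀ v ∈ T.N, ∑ a ∈ T.children v, π a = 1

/-- The root-to-leaf path traversed when the reduced strategy `σ` is played
against the environment `μ`: the minimal set of nodes containing the root,
containing `σ v` for every infoset `v` in the set, and `μ a` for every action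
`a` in the set. -/
def playPath (σ μ : V → V) : Set V :=
  ⋂₀ {s : Set V | T.root ∈ s ∧ (∀ v ∈ T.N, v ∈ s → σ v ∈ s) ∧
      ∀ a ∈ T.A, a ∈ s → μ a ∈ s}

/-- `z` is the last action node on the play path of `(σ, μ)`: it is an action on
the path of which every other action on the path is an ancestor. -/
def IsLastAction (σ μ : V → V) (z : V) : Prop :=
  z ∈ T.A ∧ z ∈ T.playPath σ μ ∧ ∀ a ∈ T.A, a ∈ T.playPath σ μ → T.Desc z a

end EFTree

/-! Under `σ`, the actions below an infoset `v` are `σ v` together with the actions below the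
infoset children `u` of `σ v`. Since `n (σ v)` is the product of the `n u`, the term
`log (n (σ v) / n v)` cancels the contributions `-log (n u)` supplied by induction on depth,
leaving `-log (n v)`. -/

namespace EFTree

variable {V : Type*} [Fintype V] [DecidableEq V]

noncomputable def descActions (T : EFTree V) (σ : V → V) (v : V) : Finset V :=
  (T.Aset σ).filter fun a => T.Desc a v

variable {T : EFTree V} {σ : V → V} {n : V → ℕ}

lemma mem_children {u v : V} : u ∈ T.children v ↔ u ≠ T.root ∧ T.parent u = v := by
  simp [children]

lemma depth_of_mem_children {u v : V} (hu : u ∈ T.children v) : T.depth u = T.depth v + 1 := by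
  obtain ⟨hne, rfl⟩ := mem_children.mp hu
  exact T.depth_parent u hne

lemma mem_A_of_mem_children {u v : V} (hu : u ∈ T.children v) (hv : v ∈ T.N) : u ∈ T.A := by
  obtain ⟨hne, rfl⟩ := mem_children.mp hu
  exact T.infoset_child u hne hv

lemma iterate_parent_root (k : ℕ) : T.parent^[k] T.root = T.root :=
  Function.iterate_fixed T.parent_root k

lemma depth_eq_depth_iterate_parent_add {a : V} {k : ℕ} (h : T.parent^[k] a ≠ T.root) :
    T.depth a = T.depth (T.parent^[k] a) + k := by
  induction k generalizing a with
  | zero => simp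
  | succ k ih =>
    rw [Function.iterate_succ_apply] at h ⊢
    have ha : a ≠ T.root := by
      rintro rfl
      rw [T.parent_root, iterate_parent_root] at h
      exact h rfl
    rw [T.depth_parent a ha, ih h]
    omega

lemma wellFounded_depth_gt : WellFounded fun u v : V => T.depth v < T.depth u :=
  have : IsTrans V fun u v => T.depth v < T.depth u := ⟨fun _ _ _ h₁ h₂ => h₂.trans h₁⟩
  have : Std.Irrefl fun u v : V => T.depth v < T.depth u := ⟨fun _ => lt_irrefl _⟩
  Finite.wellFounded_of_trans_of_irrefl _

lemma desc_refl (v : V) : T.Desc v v := ⟨0, rfl⟩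

lemma Desc.trans {a b c : V} (hab : T.Desc a b) (hbc : T.Desc b c) : T.Desc a c := by
  obtain ⟨k, rfl⟩ := hab
  obtain ⟨j, rfl⟩ := hbc
  exact ⟨j + k, Function.iterate_add_apply _ _ _ _⟩

lemma desc_of_mem_children {u v : V} (hu : u ∈ T.children v) : T.Desc u v :=
  ⟨1, (mem_children.mp hu).2⟩

lemma exists_mem_children_desc_of_desc {a v : V} (h : T.Desc a v) (hne : a ≠ v) :
    ∃ c ∈ T.children v, T.Desc a c := by
  obtain ⟨k, hk⟩ := h
  induction k generalizing a with
  | zero => exact absurd hk hne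
  | succ k ih =>
    rw [Function.iterate_succ_apply] at hk
    by_cases hpa : T.parent a = v
    · have ha : a ≠ T.root := by
        rintro rfl
        exact hne (T.parent_root ▸ hpa)
      exact ⟨a, mem_children.mpr ⟨ha, hpa⟩, desc_refl a⟩
    · obtain ⟨c, hc, hdesc⟩ := ih hpa hk
      exact ⟨c, hc, (show T.Desc a (T.parent a) from ⟨1, rfl⟩).trans hdesc⟩

lemma mem_N_or_mem_A_of_desc {a v : V} (h : T.Desc a v) (hne : a ≠ v) :
    v ∈ T.N ∨ v ∈ T.A := by
  obtain ⟨c, hc, -⟩ := exists_mem_children_desc_of_desc h hne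
  exact (T.internal_iff v).mpr ⟨c, mem_children.mp hc⟩

lemma not_desc_of_mem_children {u v : V} (hu : u ∈ T.children v) : ¬T.Desc v u := by
  rintro ⟨k, hk⟩
  have hdepth := depth_eq_depth_iterate_parent_add (k := k) (hk ▸ (mem_children.mp hu).1)
  rw [hk, depth_of_mem_children hu] at hdepth
  omega

lemma eq_of_desc_of_mem_children {a u u' w : V} (hu : u ∈ T.children w)
    (hu' : u' ∈ T.children w) (ha : T.Desc a u) (ha' : T.Desc a u') : u = u' := by
  obtain ⟨k, rfl⟩ := ha
  obtain ⟨k', rfl⟩ := ha'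
  have h := depth_eq_depth_iterate_parent_add (mem_children.mp hu).1
  have h' := depth_eq_depth_iterate_parent_add (mem_children.mp hu').1
  rw [depth_of_mem_children hu] at h
  rw [depth_of_mem_children hu'] at h'
  rw [show k = k' by omega]

lemma root_mem_reachS : T.root ∈ T.reachS σ :=
  fun _ hs => hs.1

lemma apply_mem_reachS {v : V} (hv : v ∈ T.N) (hr : v ∈ T.reachS σ) : σ v ∈ T.reachS σ :=
  fun s hs => hs.2.1 v hv (hr s hs)

lemma mem_reachS_of_mem_children {a u : V} (ha : a ∈ T.A) (hr : a ∈ T.reachS σ)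
    (hu : u ∈ T.children a) : u ∈ T.reachS σ :=
  fun s hs => hs.2.2 a ha (hr s hs) u hu

lemma reachS_subset {s : Set V} (hroot : T.root ∈ s) (hN : ∀ v ∈ T.N, v ∈ s → σ v ∈ s)
    (hA : ∀ a ∈ T.A, a ∈ s → ∀ u ∈ T.children a, u ∈ s) : T.reachS σ ⊆ s :=
  Set.sInter_subset_of_mem ⟨hroot, hN, hA⟩

lemma parent_mem_reachS (hσ : T.IsRedStrat σ) {u : V} (hu : u ∈ T.reachS σ)
    (hne : u ≠ T.root) :
    T.parent u ∈ T.reachS σ ∧ (T.parent u ∈ T.N → σ (T.parent u) = u) := by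
  let s : Set V := {u | u = T.root ∨
    (T.parent u ∈ T.reachS σ ∧ (T.parent u ∈ T.N → σ (T.parent u) = u))}
  have hsub : T.reachS σ ⊆ T.reachS σ ∩ s := by
    refine reachS_subset ⟨root_mem_reachS, Or.inl rfl⟩ ?_ ?_
    · rintro v hv ⟨hvr, -⟩
      have hσv := mem_children.mp (hσ.1 v hv hvr)
      refine ⟨apply_mem_reachS hv hvr, Or.inr ?_⟩
      rw [hσv.2]
      exact ⟨hvr, fun _ => rfl⟩
    · rintro a ha ⟨har, -⟩ u hu
      refine ⟨mem_reachS_of_mem_children ha har hu, Or.inr ?_⟩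
      rw [(mem_children.mp hu).2]
      exact ⟨har, fun haN => absurd ha (Finset.disjoint_left.mp T.disj haN)⟩
  exact ((hsub hu).2).resolve_left hne

lemma mem_reachS_of_desc (hσ : T.IsRedStrat σ) {a c : V} (ha : a ∈ T.reachS σ)
    (h : T.Desc a c) :
    c ∈ T.reachS σ := by
  obtain ⟨k, rfl⟩ := h
  induction k with
  | zero => exact ha
  | succ k ih =>
    rw [Function.iterate_succ_apply']
    by_cases hroot : T.parent^[k] a = T.root
    · rw [hroot, T.parent_root]
      exact root_mem_reachS
    · exact (parent_mem_reachS hσ ih hroot).1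

lemma pos_of_mem_N_or_mem_A
    (hnA : ∀ a ∈ T.A, n a = ∏ v ∈ (T.children a).filter (· ∈ T.N), n v)
    (hnN : ∀ v ∈ T.N, n v = ∑ a ∈ T.children v, n a) {v : V}
    (hv : v ∈ T.N ∨ v ∈ T.A) : 0 < n v := by
  induction v using T.wellFounded_depth_gt.induction with
  | _ v ih =>
  have ih_child : ∀ u ∈ T.children v, u ∈ T.N ∨ u ∈ T.A → 0 < n u := fun u hu =>
    ih u (by rw [depth_of_mem_children hu]; omega)
  rcases hv with hvN | hvA
  · rw [hnN v hvN]
    have hne : (T.children v).Nonempty := Finset.card_pos.mp (by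
      have := T.branching v hvN
      rw [children]
      omega)
    exact Finset.sum_pos (fun a ha => ih_child a ha (Or.inr (mem_A_of_mem_children ha hvN))) hne
  · rw [hnA v hvA]
    exact Finset.prod_pos fun u hu =>
      ih_child u (Finset.mem_filter.mp hu).1 (Or.inl (Finset.mem_filter.mp hu).2)

lemma mem_descActions {a v : V} :
    a ∈ T.descActions σ v ↔ a ∈ T.A ∧ a ∈ T.reachS σ ∧ T.Desc a v := by
  simp [descActions, Aset, and_assoc]

lemma descActions_eq_insert_biUnion (hσ : T.IsRedStrat σ) {v : V} (hv : v ∈ T.N)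
    (hvr : v ∈ T.reachS σ) :
    T.descActions σ v = insert (σ v)
      (((T.children (σ v)).filter (· ∈ T.N)).biUnion (T.descActions σ)) := by
  have hσv : σ v ∈ T.children v := hσ.1 v hv hvr
  have hσvA : σ v ∈ T.A := mem_A_of_mem_children hσv hv
  have hσvr : σ v ∈ T.reachS σ := apply_mem_reachS hv hvr
  ext a
  simp only [Finset.mem_insert, Finset.mem_biUnion, Finset.mem_filter, mem_descActions]
  constructor
  · rintro ⟨haA, har, hav⟩
    have hne : a ≠ v := by
      rintro rfl
      exact Finset.disjoint_left.mp T.disj hv haA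
    obtain ⟨c, hc, hac⟩ := exists_mem_children_desc_of_desc hav hne
    have hcσ : σ v = c := by
      have := (parent_mem_reachS hσ (mem_reachS_of_desc hσ har hac) (mem_children.mp hc).1).2
      rw [(mem_children.mp hc).2] at this
      exact this hv
    subst hcσ
    by_cases hac' : a = σ v
    · exact Or.inl hac'
    obtain ⟨d, hd, had⟩ := exists_mem_children_desc_of_desc hac hac'
    have hdA : d ∉ T.A :=
      T.action_child d (mem_children.mp hd).1 ((mem_children.mp hd).2 ▸ hσvA)
    have hda : a ≠ d := by
      rintro rfl
      exact hdA haA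
    have hdN : d ∈ T.N := (mem_N_or_mem_A_of_desc had hda).resolve_right hdA
    exact Or.inr ⟨d, ⟨hd, hdN⟩, haA, har, had⟩
  · rintro (rfl | ⟨u, ⟨hu, -⟩, haA, har, hau⟩)
    · exact ⟨hσvA, hσvr, desc_of_mem_children hσv⟩
    · exact ⟨haA, har, hau.trans ((desc_of_mem_children hu).trans (desc_of_mem_children hσv))⟩

lemma notMem_descActions_of_mem_children {a u : V} (hu : u ∈ T.children a) :
    a ∉ T.descActions σ u :=
  fun h => not_desc_of_mem_children hu (mem_descActions.mp h).2.2

lemma pairwiseDisjoint_descActions (w : V) :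
    (T.children w : Set V).PairwiseDisjoint (T.descActions σ) := by
  intro u hu u' hu' hne
  refine Finset.disjoint_left.mpr fun a ha ha' => hne ?_
  exact eq_of_desc_of_mem_children hu hu' (mem_descActions.mp ha).2.2 (mem_descActions.mp ha').2.2

theorem sum_log_div_parent_descActions
    (hnA : ∀ a ∈ T.A, n a = ∏ v ∈ (T.children a).filter (· ∈ T.N), n v)
    (hn : ∀ v ∈ T.N, n v ≠ 0) (hσ : T.IsRedStrat σ) {v : V} (hv : v ∈ T.N)
    (hvr : v ∈ T.reachS σ) :
    ∑ a ∈ T.descActions σ v, Real.log ((n a : ℝ) / (n (T.parent a) : ℝ)) =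
      -Real.log (n v : ℝ) := by
  induction v using T.wellFounded_depth_gt.induction with
  | _ v ih =>
  have hσv : σ v ∈ T.children v := hσ.1 v hv hvr
  have hσvA : σ v ∈ T.A := mem_A_of_mem_children hσv hv
  set U := (T.children (σ v)).filter (· ∈ T.N)
  have hU : ∀ u ∈ U, u ∈ T.children (σ v) ∧ u ∈ T.N := fun _ => Finset.mem_filter.mp
  have ih_U : ∀ u ∈ U,
      ∑ a ∈ T.descActions σ u, Real.log ((n a : ℝ) / (n (T.parent a) : ℝ)) =
        -Real.log (n u) :=
    fun u hu => ih u (by rw [depth_of_mem_children (hU u hu).1, depth_of_mem_children hσv]; omega)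
      (hU u hu).2 (mem_reachS_of_mem_children hσvA (apply_mem_reachS hv hvr) (hU u hu).1)
  have hnU : ∀ u ∈ U, (n u : ℝ) ≠ 0 := fun u hu => Nat.cast_ne_zero.mpr (hn u (hU u hu).2)
  have hlog : Real.log (n (σ v)) = ∑ u ∈ U, Real.log (n u) := by
    rw [hnA _ hσvA, Nat.cast_prod, Real.log_prod hnU]
  have hnσv : (n (σ v) : ℝ) ≠ 0 := by
    rw [hnA _ hσvA, Nat.cast_prod]
    exact Finset.prod_ne_zero_iff.mpr hnU
  have hσv_notMem : σ v ∉ U.biUnion (T.descActions σ) := fun h => by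
    obtain ⟨u, hu, hmem⟩ := Finset.mem_biUnion.mp h
    exact notMem_descActions_of_mem_children (hU u hu).1 hmem
  have hdisj : (U : Set V).PairwiseDisjoint (T.descActions σ) :=
    (pairwiseDisjoint_descActions (σ v)).subset (Finset.coe_subset.mpr (Finset.filter_subset _ _))
  rw [descActions_eq_insert_biUnion hσ hv hvr, Finset.sum_insert hσv_notMem,
    Finset.sum_biUnion hdisj, Finset.sum_congr rfl ih_U, (mem_children.mp hσv).2,
    Real.log_div hnσv (Nat.cast_ne_zero.mpr (hn v hv)), hlog, Finset.sum_neg_distrib]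
  ring

end EFTree

theorem stmt9 {V : Type*} [Fintype V] [DecidableEq V] (T : EFTree V)
    (n : V → ℕ)
    (hnA : ∀ a ∈ T.A, n a = ∏ v ∈ (T.children a).filter (· ∈ T.N), n v)
    (hnN : ∀ v ∈ T.N, n v = ∑ a ∈ T.children v, n a)
    (σ : V → V) (hσ : T.IsRedStrat σ) :
    ∀ v ∈ T.N, v ∈ T.reachS σ →
      ∑ a ∈ (T.Aset σ).filter (fun a => T.Desc a v),
        Real.log ((n a : ℝ) / (n (T.parent a) : ℝ)) = -Real.log (n v : ℝ) :=
  fun _ hv hvr => EFTree.sum_log_div_parent_descActions hnA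
    (fun _ hu => (EFTree.pos_of_mem_N_or_mem_A hnA hnN (Or.inl hu)).ne') hσ hv hvr
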